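/- arXiv:2202.02544 — 3 statements merged into one kernel-verified Lean document; each statement's English description precedes it below -/
import Mathlib

section
/- Let 1 ≤ p < ∞, -1 < β < 0, and α ∈ ℝ. If the power weight x^α belongs to QB_{β,p}, then there exists ε with 0 < ε < p(β+1) such that x^α belongs to QB_{β,p-ε}. -/
open MeasureTheory Set Real Filter
open scoped ENNReal

noncomputable section

/-- `w` satisfies the `QB_{β,p}` inequality on `(0,∞)` with constant `C`. -/
def QBcond (β p C : ℝ) (w : ℝ → ℝ) : Prop :=
  ∀ r : ℝ, 0 < r →
    (∫ x in Ioi r, (r / x) ^ p * w x) ≤ C * ∫ x in Ioc (0:ℝ) r, (x / r) ^ (β * p) * w x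

/-- `w ∈ QB_{β,p}`. -/
def QB (β p : ℝ) (w : ℝ → ℝ) : Prop := ∃ C : ℝ, 0 < C ∧ QBcond β p C w

/-- The `QB_{β,p}` constant `[w]_{QB_{β,p}}`. -/
def QBconst (β p : ℝ) (w : ℝ → ℝ) : ℝ := sInf {D : ℝ | QBcond β p (D - 1) w}

/-- `f ∈ Q_β`: `f ≥ 0` and `x^{-β} f x` is non-increasing on `(0,∞)`. -/
def Qmono (β : ℝ) (f : ℝ → ℝ) : Prop :=
  (∀ x, 0 ≤ f x) ∧ AntitoneOn (fun x => x ^ (-β) * f x) (Ioi (0:ℝ))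

/-- A weight: nonnegative and integrable on `(0,r]` for every `r > 0`. -/
def IsWeight (w : ℝ → ℝ) : Prop :=
  (∀ x, 0 ≤ w x) ∧ ∀ r : ℝ, 0 < r → IntegrableOn w (Ioc 0 r)

/-- `Ψ(x) = ∫_0^x ψ`. -/
def Psi (ψ : ℝ → ℝ) (x : ℝ) : ℝ := ∫ t in Ioc (0:ℝ) x, ψ t

/-- `w` satisfies the `QB_{β,ψ,p}` inequality with constant `C`. -/
def QBpsiCond (β p C : ℝ) (ψ w : ℝ → ℝ) : Prop :=
  ∀ r : ℝ, 0 < r →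
    (∫ x in Ioi r, (Psi ψ r / Psi ψ x) ^ p * w x)
      ≤ C * ∫ x in Ioc (0:ℝ) r, (Psi ψ x / Psi ψ r) ^ (β * p) * w x

/-- `w ∈ QB_{β,ψ,p}`. -/
def QBpsi (β p : ℝ) (ψ w : ℝ → ℝ) : Prop := ∃ C : ℝ, 0 < C ∧ QBpsiCond β p C ψ w

/-- The `QB_{β,ψ,p}` constant. -/
def QBpsiConst (β p : ℝ) (ψ w : ℝ → ℝ) : ℝ := sInf {D : ℝ | QBpsiCond β p (D - 1) ψ w}

/-- `w` satisfies the `QB_{β,p}(I)` inequality on `I = (0,1)` with constant `C`. -/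
def QBIcond (β p C : ℝ) (w : ℝ → ℝ) : Prop :=
  ∀ r : ℝ, 0 < r → r ≤ 1 →
    (∫ x in Ioc r (1:ℝ), (r / x) ^ p * w x) ≤ C * ∫ x in Ioc (0:ℝ) r, (x / r) ^ (β * p) * w x

/-- `w ∈ QB_{β,p}(I)`. -/
def QBI (β p : ℝ) (w : ℝ → ℝ) : Prop := ∃ C : ℝ, 0 < C ∧ QBIcond β p C w

/-- The `QB_{β,p}(I)` constant. -/
def QBIconst (β p : ℝ) (w : ℝ → ℝ) : ℝ := sInf {D : ℝ | QBIcond β p (D - 1) w}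

/-- `f ∈ Q_β(I)`: `f ≥ 0` and `x^{-β} f x` non-increasing on `(0,1)`. -/
def QmonoI (β : ℝ) (f : ℝ → ℝ) : Prop :=
  (∀ x, 0 ≤ f x) ∧ AntitoneOn (fun x => x ^ (-β) * f x) (Ioo (0:ℝ) 1)

/-- The Hardy averaging operator. -/
def Hardy (f : ℝ → ℝ) (x : ℝ) : ℝ := (1 / x) * ∫ t in Ioc (0:ℝ) x, f t

/-- The weighted grand Lebesgue norm `‖f‖_{L_w^{p),θ}(I)}` on `I = (0,1)`. -/
def grandNorm (p θ : ℝ) (w f : ℝ → ℝ) : ℝ≥0∞ :=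
  ⨆ ε ∈ Ioo (0:ℝ) (p - 1),
    (ENNReal.ofReal (ε ^ θ) *
      ∫⁻ x in Ioo (0:ℝ) 1, ENNReal.ofReal (|f x| ^ (p - ε) * w x)) ^ (1 / (p - ε))

/-! For a power weight both sides of the `QB_{β,q}` inequality are explicit:
`∫_r^∞ (r/x)^q x^α dx = r^{α+1}/(q-α-1)` and `∫_0^r (x/r)^{βq} x^α dx = r^{α+1}/(βq+α+1)`, so
`x^α ∈ QB_{β,q}` exactly when `-βq-1 < α < q-1`, with constant the ratio of the two denominators.
These are strict inequalities continuous in `q`, so they survive for all `q` slightly below `p`. -/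

open Topology

section PowerWeight

variable {r q s α : ℝ}

lemma eqOn_div_rpow_mul_rpow_Ioi (hr : 0 < r) :
    EqOn (fun x : ℝ => (r / x) ^ q * x ^ α) (fun x => r ^ q * x ^ (α - q)) (Ioi r) := by
  intro x hx
  have hx0 : 0 < x := hr.trans hx
  simp only [div_rpow hr.le hx0.le, rpow_sub hx0]
  ring

lemma eqOn_div_rpow_mul_rpow_Ioc (hr : 0 < r) :
    EqOn (fun x : ℝ => (x / r) ^ s * x ^ α) (fun x => (r ^ s)⁻¹ * x ^ (s + α)) (Ioc 0 r) := by
  intro x hx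
  simp only [div_rpow hx.1.le hr.le, rpow_add hx.1]
  ring

lemma integrableOn_Ioi_div_rpow_mul_rpow_iff (hr : 0 < r) :
    IntegrableOn (fun x : ℝ => (r / x) ^ q * x ^ α) (Ioi r) ↔ α < q - 1 := by
  rw [integrableOn_congr_fun (eqOn_div_rpow_mul_rpow_Ioi hr) measurableSet_Ioi, IntegrableOn,
    integrable_const_mul_iff (rpow_pos_of_pos hr q).ne'.isUnit, ← IntegrableOn,
    integrableOn_Ioi_rpow_iff hr]
  constructor <;> intro h <;> linarith

lemma integrableOn_Ioc_div_rpow_mul_rpow_iff (hr : 0 < r) :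
    IntegrableOn (fun x : ℝ => (x / r) ^ s * x ^ α) (Ioc 0 r) ↔ -1 < s + α := by
  rw [integrableOn_congr_fun (eqOn_div_rpow_mul_rpow_Ioc hr) measurableSet_Ioc, IntegrableOn,
    integrable_const_mul_iff (inv_pos.2 (rpow_pos_of_pos hr s)).ne'.isUnit, ← IntegrableOn,
    integrableOn_Ioc_iff_integrableOn_Ioo, intervalIntegral.integrableOn_Ioo_rpow_iff hr]

lemma integral_Ioi_div_rpow_mul_rpow (hr : 0 < r) (h : α < q - 1) :
    ∫ x in Ioi r, (r / x) ^ q * x ^ α = r ^ (α + 1) / (q - α - 1) := by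
  rw [setIntegral_congr_fun measurableSet_Ioi (eqOn_div_rpow_mul_rpow_Ioi hr),
    integral_const_mul, integral_Ioi_rpow_of_lt (by linarith) hr, ← mul_div_assoc, mul_neg,
    ← rpow_add hr, neg_div, ← div_neg, show q + (α - q + 1) = α + 1 by ring,
    show -(α - q + 1) = q - α - 1 by ring]

lemma integral_Ioc_div_rpow_mul_rpow (hr : 0 < r) (h : -1 < s + α) :
    ∫ x in Ioc 0 r, (x / r) ^ s * x ^ α = r ^ (α + 1) / (s + α + 1) := by
  rw [setIntegral_congr_fun measurableSet_Ioc (eqOn_div_rpow_mul_rpow_Ioc hr),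
    integral_const_mul, ← intervalIntegral.integral_of_le hr.le, integral_rpow (Or.inl h),
    zero_rpow (by linarith), sub_zero, ← rpow_neg hr.le, mul_div_assoc', ← rpow_add hr]
  ring_nf

end PowerWeight

/-- For `α ≥ q - 1` the left-hand side of the `QB_{β,q}` inequality is not integrable, so Lean's
integral gives it the junk value `0` and the inequality holds trivially. -/
theorem qb_rpow_iff (β q α : ℝ) :
    QB β q (fun x => x ^ α) ↔ (α < q - 1 → -1 < β * q + α) := by
  constructor
  · rintro ⟨C, -, hC⟩ hαq
    by_contra! hdiv
    have h₁ := hC 1 one_pos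
    rw [integral_undef (mt (integrableOn_Ioc_div_rpow_mul_rpow_iff one_pos).1 hdiv.not_gt),
      mul_zero, integral_Ioi_div_rpow_mul_rpow one_pos hαq] at h₁
    exact h₁.not_gt (div_pos (rpow_pos_of_pos one_pos _) (by linarith))
  · intro h
    by_cases hαq : α < q - 1
    · have hnum : 0 < β * q + α + 1 := by linarith [h hαq]
      refine ⟨(β * q + α + 1) / (q - α - 1), div_pos hnum (by linarith), fun r hr => ?_⟩
      rw [integral_Ioi_div_rpow_mul_rpow hr hαq, integral_Ioc_div_rpow_mul_rpow hr (h hαq),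
        div_mul_div_comm, mul_comm (β * q + α + 1), mul_div_mul_right _ _ hnum.ne']
    · refine ⟨1, one_pos, fun r hr => ?_⟩
      rw [integral_undef (mt (integrableOn_Ioi_div_rpow_mul_rpow_iff hr).1 hαq), one_mul]
      exact setIntegral_nonneg measurableSet_Ioc fun x hx =>
        mul_nonneg (rpow_nonneg (div_nonneg hx.1.le hr.le) _) (rpow_nonneg hx.1.le _)

theorem eventually_qb_rpow_nhdsLT {β p α : ℝ} (h : QB β p (fun x => x ^ α)) :
    ∀ᶠ q in 𝓝[<] p, QB β q (fun x => x ^ α) := by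
  simp only [qb_rpow_iff] at h ⊢
  by_cases hαp : α < p - 1
  · have hcont : Continuous fun q => β * q + α := by fun_prop
    have : ∀ᶠ q in 𝓝 p, -1 < β * q + α := (hcont.tendsto p).eventually_const_lt (h hαp)
    exact (this.filter_mono nhdsWithin_le_nhds).mono fun q hq _ => hq
  · filter_upwards [self_mem_nhdsWithin] with q (hq : q < p) hαq
    exact absurd (by linarith) hαp

theorem power_weight_openness_general (p β α : ℝ) (hp : 1 ≤ p) (hβ1 : -1 < β)
    (hQB : QB β p (fun x => x ^ α)) :
    ∃ ε : ℝ, 0 < ε ∧ ε < p * (β + 1) ∧ QB β (p - ε) (fun x => x ^ α) := by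
  have hwidth : 0 < p * (β + 1) := mul_pos (by linarith) (by linarith)
  obtain ⟨q, hq, hqp, hqlo⟩ := ((eventually_qb_rpow_nhdsLT hQB).and
    (Ioo_mem_nhdsLT (sub_lt_self p hwidth))).exists
  exact ⟨p - q, by linarith, by linarith, by rwa [sub_sub_cancel]⟩

theorem power_weight_openness (p β α : ℝ) (hp : 1 ≤ p) (hβ1 : -1 < β) (hβ0 : β < 0)
    (hQB : QB β p (fun x => x ^ α)) :
    ∃ ε : ℝ, 0 < ε ∧ ε < p * (β + 1) ∧ QB β (p - ε) (fun x => x ^ α) :=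
  power_weight_openness_general p β α hp hβ1 hQB
end
end

section
/- Let I = (0,1), -1 < β ≤ 0, 1 ≤ p < ∞, and α ∈ ℝ. The power weight x^α belongs to QB_{β,p}(I) (i.e., there is C > 0 with ∫_r^1 (r/x)^p x^α dx ≤ C ∫_0^r (x/r)^{βp} x^α dx for all 0 < r ≤ 1) if and only if -βp - 1 < α < p - 1. -/
open MeasureTheory Set Real Filter
open scoped ENNReal

noncomputable section

/-!
For the power weight both sides of the `QB` inequality are explicit. The right side is
`r^(-βp) ∫_0^r x^(βp+α) dx`, which equals `r^(α+1)/(βp+α+1)` when `βp + α > -1`; otherwise the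
integrand is not integrable and the Bochner integral is `0`, which the positive left side rules
out. The left side is `r^p ∫_r^1 x^(α-p) dx`. For `α < p - 1` it is at most
`r^(α+1)/(p-1-α)`, giving the inequality with an explicit constant; for `α ≥ p - 1` comparison
with `∫_r^1 dx/x` bounds it below by `r^(α+1) log (1/r)`, which is not `O(r^(α+1))` as `r → 0`.
-/

theorem setIntegral_Ioc_div_rpow_mul_rpow {a b r : ℝ} (ha : 0 ≤ a) (hr : 0 ≤ r) (p α : ℝ) :
    ∫ x in Ioc a b, (r / x) ^ p * x ^ α = r ^ p * ∫ x in Ioc a b, x ^ (α - p) := by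
  rw [← integral_const_mul]
  refine setIntegral_congr_fun measurableSet_Ioc fun x hx => ?_
  have hx0 : 0 < x := ha.trans_lt hx.1
  rw [div_rpow hr hx0.le, rpow_sub hx0]
  ring

theorem setIntegral_Ioc_rpow_div_mul_rpow {a b r : ℝ} (ha : 0 ≤ a) (hr : 0 ≤ r) (γ α : ℝ) :
    ∫ x in Ioc a b, (x / r) ^ γ * x ^ α = r ^ (-γ) * ∫ x in Ioc a b, x ^ (γ + α) := by
  rw [← integral_const_mul]
  refine setIntegral_congr_fun measurableSet_Ioc fun x hx => ?_
  have hx0 : 0 < x := ha.trans_lt hx.1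
  rw [div_rpow hx0.le hr, rpow_neg hr, rpow_add hx0]
  ring

theorem setIntegral_Ioc_zero_rpow_of_neg_one_lt {r s : ℝ} (hr : 0 < r) (hs : -1 < s) :
    ∫ x in Ioc 0 r, x ^ s = r ^ (s + 1) / (s + 1) := by
  rw [← intervalIntegral.integral_of_le hr.le, integral_rpow (Or.inl hs),
    zero_rpow (by linarith), sub_zero]

theorem setIntegral_Ioc_zero_rpow_of_le_neg_one {r s : ℝ} (hr : 0 < r) (hs : s ≤ -1) :
    ∫ x in Ioc 0 r, x ^ s = 0 := by
  refine integral_undef fun h => ?_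
  change IntegrableOn (fun x : ℝ => x ^ s) (Ioc 0 r) at h
  rw [integrableOn_Ioc_iff_integrableOn_Ioo, intervalIntegral.integrableOn_Ioo_rpow_iff hr] at h
  linarith

theorem setIntegral_Ioc_rpow_pos {a b : ℝ} (ha : 0 < a) (hab : a < b) (s : ℝ) :
    0 < ∫ x in Ioc a b, x ^ s := by
  rw [← intervalIntegral.integral_of_le hab.le]
  refine intervalIntegral.intervalIntegral_pos_of_pos_on ?_ (fun x hx => rpow_pos_of_pos
    (ha.trans hx.1) s) hab
  exact intervalIntegral.intervalIntegrable_rpow (Or.inr fun h => by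
    rw [uIcc_of_le hab.le] at h; linarith [h.1])

theorem setIntegral_Ioc_rpow_le_of_lt_neg_one {a b s : ℝ} (ha : 0 < a) (hs : s < -1) :
    ∫ x in Ioc a b, x ^ s ≤ -a ^ (s + 1) / (s + 1) := by
  rw [← integral_Ioi_rpow_of_lt hs ha]
  refine setIntegral_mono_set (integrableOn_Ioi_rpow_of_lt hs ha) ?_
    (Ioc_subset_Ioi_self.eventuallyLE)
  filter_upwards [ae_restrict_mem measurableSet_Ioi] with x hx
  exact rpow_nonneg (ha.trans hx).le s

theorem rpow_mul_neg_log_le_setIntegral_Ioc_rpow {r s : ℝ} (hr : 0 < r) (hr1 : r ≤ 1)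
    (hs : 0 ≤ s) : r ^ s * -log r ≤ ∫ x in Ioc r 1, x ^ (s - 1) := by
  have h0 : (0 : ℝ) ∉ uIcc r 1 := fun h => by rw [uIcc_of_le hr1] at h; linarith [h.1]
  rw [← intervalIntegral.integral_of_le hr1, ← log_inv, ← one_div,
    ← integral_inv_of_pos hr one_pos, ← intervalIntegral.integral_const_mul]
  refine intervalIntegral.integral_mono_on hr1
    ((intervalIntegral.intervalIntegrable_inv (fun x hx => ?_) continuousOn_id).const_mul _)
    (intervalIntegral.intervalIntegrable_rpow (Or.inr h0)) fun x hx => ?_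
  · exact fun h => h0 (h ▸ hx)
  · have hx0 : 0 < x := hr.trans_le hx.1
    rw [rpow_sub_one hx0.ne', div_eq_mul_inv]
    exact mul_le_mul_of_nonneg_right (rpow_le_rpow hr.le hx.1 hs) (inv_nonneg.2 hx0.le)

theorem rpow_neg_mul_setIntegral_Ioc_zero_rpow_add {r γ α : ℝ} (hr : 0 < r) (h : -1 < γ + α) :
    r ^ (-γ) * ∫ x in Ioc 0 r, x ^ (γ + α) = r ^ (α + 1) / (γ + α + 1) := by
  rw [setIntegral_Ioc_zero_rpow_of_neg_one_lt hr h, mul_div_assoc', ← rpow_add hr]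
  ring_nf

theorem QBIcond_rpow_iff {β p C α : ℝ} :
    QBIcond β p C (fun x => x ^ α) ↔ ∀ r : ℝ, 0 < r → r ≤ 1 →
      r ^ p * ∫ x in Ioc r 1, x ^ (α - p) ≤
        C * (r ^ (-(β * p)) * ∫ x in Ioc 0 r, x ^ (β * p + α)) := by
  refine forall₂_congr fun r hr => ?_
  rw [setIntegral_Ioc_div_rpow_mul_rpow hr.le hr.le,
    setIntegral_Ioc_rpow_div_mul_rpow le_rfl hr.le]

theorem neg_one_lt_of_QBIcond_rpow {β p C α : ℝ} (h : QBIcond β p C (fun x => x ^ α)) :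
    -1 < β * p + α := by
  by_contra! hs
  have h_half := QBIcond_rpow_iff.1 h (1 / 2) (by norm_num) (by norm_num)
  rw [setIntegral_Ioc_zero_rpow_of_le_neg_one (by norm_num) hs, mul_zero, mul_zero] at h_half
  exact h_half.not_gt (mul_pos (by positivity) (setIntegral_Ioc_rpow_pos (by norm_num)
    (by norm_num) _))

theorem lt_of_QBIcond_rpow {β p C α : ℝ} (h : QBIcond β p C (fun x => x ^ α)) :
    α < p - 1 := by
  by_contra! hα
  set b := β * p + α + 1
  have hb : 0 < b := by linarith [neg_one_lt_of_QBIcond_rpow h]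
  have h_log : ∀ r : ℝ, 0 < r → r ≤ 1 → -log r ≤ C / b := by
    intro r hr hr1
    have hQ := QBIcond_rpow_iff.1 h r hr hr1
    rw [rpow_neg_mul_setIntegral_Ioc_zero_rpow_add hr (by linarith)] at hQ
    have hlow := rpow_mul_neg_log_le_setIntegral_Ioc_rpow hr hr1 (s := α - p + 1) (by linarith)
    rw [show α - p + 1 - 1 = α - p by ring] at hlow
    have key : r ^ (α + 1) * -log r ≤ r ^ (α + 1) * (C / b) :=
      calc r ^ (α + 1) * -log r = r ^ p * (r ^ (α - p + 1) * -log r) := by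
            rw [← mul_assoc, ← rpow_add hr]; ring_nf
        _ ≤ r ^ p * ∫ x in Ioc r 1, x ^ (α - p) := by gcongr
        _ ≤ C * (r ^ (α + 1) / b) := hQ
        _ = r ^ (α + 1) * (C / b) := by ring
    exact le_of_mul_le_mul_left key (rpow_pos_of_pos hr _)
  have h_small := h_log (exp (-(|C / b| + 1))) (exp_pos _)
    (exp_le_one_iff.2 (by linarith [abs_nonneg (C / b)]))
  rw [log_exp] at h_small
  linarith [le_abs_self (C / b)]

theorem QBIcond_rpow_of_lt {β p α : ℝ} (h1 : -1 < β * p + α) (h2 : α < p - 1) :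
    QBIcond β p ((β * p + α + 1) / (p - 1 - α)) (fun x => x ^ α) := by
  refine QBIcond_rpow_iff.2 fun r hr hr1 => ?_
  have hb : 0 < β * p + α + 1 := by linarith
  rw [rpow_neg_mul_setIntegral_Ioc_zero_rpow_add hr h1]
  calc r ^ p * ∫ x in Ioc r 1, x ^ (α - p)
      ≤ r ^ p * (-r ^ (α - p + 1) / (α - p + 1)) := by
        gcongr; exact setIntegral_Ioc_rpow_le_of_lt_neg_one hr (by linarith)
    _ = r ^ (α + 1) / (p - 1 - α) := by
        rw [mul_div_assoc', mul_neg, ← rpow_add hr, neg_div, ← div_neg]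
        ring_nf
    _ = _ := by rw [div_mul_div_comm, mul_comm (β * p + α + 1), mul_div_mul_right _ _ hb.ne']

theorem power_weight_mem_QBI_iff_general (p β α : ℝ) :
    QBI β p (fun x => x ^ α) ↔ (-(β * p) - 1 < α ∧ α < p - 1) := by
  constructor
  · rintro ⟨C, -, h⟩
    exact ⟨by linarith [neg_one_lt_of_QBIcond_rpow h], lt_of_QBIcond_rpow h⟩
  · rintro ⟨h1, h2⟩
    exact ⟨_, div_pos (by linarith) (by linarith), QBIcond_rpow_of_lt (by linarith) h2⟩

theorem power_weight_mem_QBI_iff (p β α : ℝ) (hp : 1 ≤ p) (hβ1 : -1 < β) (hβ0 : β ≤ 0) :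
    QBI β p (fun x => x ^ α) ↔ (-(β * p) - 1 < α ∧ α < p - 1) :=
  power_weight_mem_QBI_iff_general p β α
end
end

section
/- Let -1 < β ≤ 0 and let f : (0,1) → [0,∞) be measurable with x^{-β}f(x) non-increasing. Then the Hardy average Hf(x) = (1/x)∫_0^x f(t) dt also satisfies that x^{-β}Hf(x) is non-increasing on (0,1); i.e., H maps Q_β(I) into Q_β(I). -/
open MeasureTheory Set Real Filter
open scoped ENNReal

noncomputable section

/-
Substituting `t = x s` writes `Hf(x) = ∫₀¹ f(x s) ds`, and then
`x^{-β} Hf(x) = ∫₀¹ s^β ((x s)^{-β} f(x s)) ds`. For each fixed `s ∈ (0,1]` the integrand is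
non-increasing in `x`, because `x ↦ x^{-β} f(x)` is, so the integral is non-increasing as well.
-/

lemma integrableOn_comp_mul_Ioc_zero_one {f : ℝ → ℝ} {x : ℝ} (hx : 0 < x)
    (hf : IntegrableOn f (Ioc 0 x)) : IntegrableOn (fun s => f (x * s)) (Ioc 0 1) := by
  have h := ((intervalIntegrable_iff_integrableOn_Ioc_of_le hx.le).2 hf).comp_mul_left (c := x)
  rw [zero_div, div_self hx.ne'] at h
  exact (intervalIntegrable_iff_integrableOn_Ioc_of_le zero_le_one).1 h

lemma hardy_eq_integral_comp_mul (f : ℝ → ℝ) {x : ℝ} (hx : 0 < x) :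
    Hardy f x = ∫ s in Ioc (0:ℝ) 1, f (x * s) := by
  have h : (∫ s in (0:ℝ)..1, f (x * s)) = x⁻¹ • ∫ t in (0:ℝ)..x, f t := by
    simpa using intervalIntegral.integral_comp_mul_left (a := 0) (b := 1) f hx.ne'
  rw [← intervalIntegral.integral_of_le zero_le_one, h, intervalIntegral.integral_of_le hx.le,
    smul_eq_mul, Hardy, one_div]

lemma rpow_neg_mul_eq_rpow_mul_rpow_neg_mul {t s : ℝ} (β a : ℝ) (ht : 0 < t) (hs : 0 < s) :
    t ^ (-β) * a = s ^ β * ((t * s) ^ (-β) * a) := by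
  rw [Real.mul_rpow ht.le hs.le, Real.rpow_neg hs.le]
  field_simp [(Real.rpow_pos_of_pos hs β).ne']

theorem hardy_preserves_Qbeta_general (β : ℝ)
    (f : ℝ → ℝ) (hfi : IntegrableOn f (Ioo 0 1))
    (hf : QmonoI β f) :
    AntitoneOn (fun x => x ^ (-β) * Hardy f x) (Ioo (0:ℝ) 1) := by
  have hmaps {x : ℝ} (hx : x ∈ Ioo (0:ℝ) 1) {s : ℝ} (hs : s ∈ Ioc (0:ℝ) 1) :
      x * s ∈ Ioo (0:ℝ) 1 :=
    ⟨mul_pos hx.1 hs.1, (mul_le_of_le_one_right hx.1.le hs.2).trans_lt hx.2⟩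
  have hint {x : ℝ} (hx : x ∈ Ioo (0:ℝ) 1) :
      IntegrableOn (fun s => x ^ (-β) * f (x * s)) (Ioc 0 1) :=
    (integrableOn_comp_mul_Ioc_zero_one hx.1
      (hfi.mono_set fun t ht => ⟨ht.1, ht.2.trans_lt hx.2⟩)).const_mul _
  intro x hx y hy hxy
  simp only [hardy_eq_integral_comp_mul f hx.1, hardy_eq_integral_comp_mul f hy.1,
    ← integral_const_mul]
  refine setIntegral_mono_on (hint hy) (hint hx) measurableSet_Ioc fun s hs => ?_
  rw [rpow_neg_mul_eq_rpow_mul_rpow_neg_mul β _ hx.1 hs.1,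
    rpow_neg_mul_eq_rpow_mul_rpow_neg_mul β _ hy.1 hs.1]
  exact mul_le_mul_of_nonneg_left
    (hf.2 (hmaps hx hs) (hmaps hy hs) (mul_le_mul_of_nonneg_right hxy hs.1.le))
    (Real.rpow_nonneg hs.1.le β)

theorem hardy_preserves_Qbeta (β : ℝ) (hβ1 : -1 < β) (hβ0 : β ≤ 0)
    (f : ℝ → ℝ) (hfm : Measurable f) (hfi : IntegrableOn f (Ioo 0 1))
    (hf : QmonoI β f) :
    AntitoneOn (fun x => x ^ (-β) * Hardy f x) (Ioo (0:ℝ) 1) :=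
  hardy_preserves_Qbeta_general β f hfi hf
end
end
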